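/- Attainment and completeness for the rank-one tropical optimization problem: under the hypotheses Tr(B) ≤ 0, h regular with h⁻B*g ≤ 0, p, q nonzero with q⁻p > −∞, set θ = ⊕_{0≤i+j≤n−2}(h⁻B^ip)(q⁻B^jg) ⊕ q⁻B*p and G = ⊕_{0≤i+j≤n−2} θ^{−1}B^i p q⁻ B^j ⊕ B*. Then a regular vector x satisfies the constraints Bx ≤ x, g ≤ x ≤ h and achieves x⁻pq⁻x = θ if and only if x = G u for some nonzero vector u with g ≤ u ≤ (h⁻G)⁻. -/

import Mathlib

noncomputable section
abbrev T := WithBot ℝ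

/-- Tropical (max-plus) sum over a finite family. -/
def tSum {n : ℕ} (f : Fin n → T) : T := Finset.univ.sup f

/-- Tropical matrix product. -/
def tMulM {m n p : ℕ} (A : Matrix (Fin m) (Fin n) T) (B : Matrix (Fin n) (Fin p) T) :
    Matrix (Fin m) (Fin p) T := fun i j => tSum fun k => A i k + B k j

/-- Tropical identity matrix. -/
def tId (n : ℕ) : Matrix (Fin n) (Fin n) T := fun i j => if i = j then (0 : T) else ⊥

/-- Tropical matrix power. -/
def tpow {n : ℕ} (A : Matrix (Fin n) (Fin n) T) : ℕ → Matrix (Fin n) (Fin n) T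
  | 0 => tId n
  | k + 1 => tMulM (tpow A k) A

/-- Tropical trace. -/
def tTr {n : ℕ} (A : Matrix (Fin n) (Fin n) T) : T := tSum fun k => A k k

/-- Multiplicative conjugate of a scalar: negation on finite entries, -∞ ↦ -∞. -/
def tconj (t : T) : T := WithBot.map (fun a : ℝ => -a) t

/-- Kleene star (for an n×n matrix): I ⊕ A ⊕ ⋯ ⊕ A^(n-1). -/
def kstar {n : ℕ} (A : Matrix (Fin n) (Fin n) T) : Matrix (Fin n) (Fin n) T :=
  fun i j => tSum fun k : Fin n => tpow A (k : ℕ) i j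

/-- Tr(A) = tr A ⊕ ⋯ ⊕ tr Aⁿ. -/
def TrB {n : ℕ} (A : Matrix (Fin n) (Fin n) T) : T := tSum fun k : Fin n => tTr (tpow A ((k : ℕ) + 1))

/-- Tropical root: t^{1/k} = t/k. -/
def tdiv (t : T) (k : ℕ) : T := WithBot.map (fun a : ℝ => a / k) t

/-- Row vector × matrix × column vector. -/
def vMv {n : ℕ} (u : Fin n → T) (A : Matrix (Fin n) (Fin n) T) (v : Fin n → T) : T :=
  tSum fun i => u i + tSum fun j => A i j + v j

/-- The rank-one matrix p q⁻. -/
def pqm {n : ℕ} (p q : Fin n → T) : Matrix (Fin n) (Fin n) T := fun i j => p i + tconj (q j)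

/-- Pairs (i,j) of exponents with 0 ≤ i + j ≤ n − 2. -/
def pairSet (n : ℕ) : Finset (ℕ × ℕ) :=
  (Finset.range n ×ˢ Finset.range n).filter (fun ij => ij.1 + ij.2 + 2 ≤ n)

/-!
Put `A = B ⊕ θ⁻¹ p q⁻`. For finite `θ` and regular `x`, the objective is at most `θ` exactly
when `θ⁻¹ p q⁻ x ≤ x`, and it is at least `θ` on the whole feasible set, because `Bᵏ x ≤ x`
means `(Bᵏ)ₗₘ ≤ xₗ - xₘ`, which bounds each term of `θ` by the objective. So the optimal regular
vectors are the regular solutions of `A x ≤ x`, `g ≤ x ≤ h`.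

In a power of `A`, a product containing the rank-one factor twice contains `q⁻ Bᵏ p ≤ θ` and is
absorbed by a product containing it once. Hence `Tr A ≤ 0` and `A* = G`. Finally, when
`Tr A ≤ 0` every walk of length `n` has a closed subwalk of weight `≤ 0`, so `A A* ≤ A*`, and the
solutions of `A x ≤ x`, `g ≤ x ≤ h` are `x = A* u` with `g ≤ u ≤ (h⁻ A*)⁻`.
-/

section TropicalSum

variable {ι α : Type*} {m n : ℕ}

lemma Finset.sup_add_const [AddCommMonoid α] [LinearOrder α] [IsOrderedAddMonoid α]
    (s : Finset ι) (f : ι → WithBot α) (c : WithBot α) :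
    s.sup f + c = s.sup fun i => f i + c :=
  Finset.apply_sup_eq_sup_comp (· + c) (fun a b => max_add a b c) (WithBot.bot_add c)

lemma Finset.const_add_sup [AddCommMonoid α] [LinearOrder α] [IsOrderedAddMonoid α]
    (s : Finset ι) (f : ι → WithBot α) (c : WithBot α) :
    c + s.sup f = s.sup fun i => c + f i := by
  simp only [add_comm c, Finset.sup_add_const]

lemma tSum_le_iff {f : Fin n → T} {c : T} : tSum f ≤ c ↔ ∀ i, f i ≤ c := by
  simp [tSum]

lemma le_tSum (f : Fin n → T) (i : Fin n) : f i ≤ tSum f :=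
  Finset.le_sup (Finset.mem_univ i)

lemma le_tSum_of_le {f : Fin n → T} {c : T} (i : Fin n) (h : c ≤ f i) : c ≤ tSum f :=
  h.trans (le_tSum f i)

lemma tSum_mono {f g : Fin n → T} (h : ∀ i, f i ≤ g i) : tSum f ≤ tSum g :=
  tSum_le_iff.2 fun i => le_tSum_of_le i (h i)

lemma tSum_add_const (f : Fin n → T) (c : T) : tSum f + c = tSum fun i => f i + c :=
  Finset.sup_add_const _ _ _

lemma const_add_tSum (f : Fin n → T) (c : T) : c + tSum f = tSum fun i => c + f i :=
  Finset.const_add_sup _ _ _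

lemma tSum_comm (f : Fin m → Fin n → T) :
    (tSum fun i => tSum fun j => f i j) = tSum fun j => tSum fun i => f i j :=
  Finset.sup_comm _ _ f

lemma tSum_max (f g : Fin n → T) :
    (tSum fun i => max (f i) (g i)) = max (tSum f) (tSum g) :=
  Finset.sup_sup

lemma tSum_ite_eq (i : Fin n) (f : Fin n → T) : (tSum fun k => if i = k then f k else ⊥) = f i :=
  le_antisymm (tSum_le_iff.2 fun k => by split_ifs with h <;> simp [h]) (le_tSum_of_le i (by simp))

lemma tSum_add_tSum (f : Fin m → T) (g : Fin n → T) :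
    (tSum fun i => tSum fun j => f i + g j) = tSum f + tSum g := by
  rw [tSum_add_const]
  simp only [const_add_tSum]

lemma tSum_add_tSum_assoc (x : Fin m → T) (A : Fin m → Fin n → T) (y : Fin n → T) :
    (tSum fun i => x i + tSum fun j => A i j + y j) =
      tSum fun j => (tSum fun i => x i + A i j) + y j := by
  simp only [const_add_tSum, tSum_add_const, add_assoc]
  exact tSum_comm _

lemma exists_tSum_eq (f : Fin n → T) (i : Fin n) : ∃ k, tSum f = f k := by
  obtain ⟨k, -, hk⟩ := Finset.exists_mem_eq_sup Finset.univ ⟨i, Finset.mem_univ i⟩ f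
  exact ⟨k, hk⟩

lemma pos_of_tSum_ne_bot {f : Fin n → T} (h : tSum f ≠ ⊥) : 0 < n :=
  Nat.pos_of_ne_zero fun hn => h (by subst hn; simp [tSum])

end TropicalSum

section MatrixAlgebra

variable {m n k l : ℕ}

def tMulV (A : Matrix (Fin m) (Fin n) T) (v : Fin n → T) : Fin m → T :=
  fun i => tSum fun j => A i j + v j

def tDot (u v : Fin n → T) : T := tSum fun i => u i + v i

lemma tMulM_assoc (A : Matrix (Fin m) (Fin n) T) (B : Matrix (Fin n) (Fin k) T)
    (C : Matrix (Fin k) (Fin l) T) : tMulM (tMulM A B) C = tMulM A (tMulM B C) := by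
  funext i j
  exact (tSum_add_tSum_assoc _ _ _).symm

lemma tMulV_tMulM (A : Matrix (Fin m) (Fin n) T) (B : Matrix (Fin n) (Fin k) T)
    (v : Fin k → T) : tMulV (tMulM A B) v = tMulV A (tMulV B v) := by
  funext i
  exact (tSum_add_tSum_assoc _ _ _).symm

lemma add_le_tMulM (A : Matrix (Fin m) (Fin n) T) (B : Matrix (Fin n) (Fin k) T)
    (i : Fin m) (c : Fin n) (j : Fin k) : A i c + B c j ≤ tMulM A B i j :=
  le_tSum (fun c => A i c + B c j) c

lemma tMulM_mono {A A' : Matrix (Fin m) (Fin n) T} {B B' : Matrix (Fin n) (Fin k) T}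
    (hA : ∀ i j, A i j ≤ A' i j) (hB : ∀ i j, B i j ≤ B' i j) (i : Fin m) (j : Fin k) :
    tMulM A B i j ≤ tMulM A' B' i j :=
  tSum_mono fun c => add_le_add (hA i c) (hB c j)

lemma tMulV_mono {A A' : Matrix (Fin m) (Fin n) T} {v v' : Fin n → T}
    (hA : ∀ i j, A i j ≤ A' i j) (hv : ∀ j, v j ≤ v' j) (i : Fin m) :
    tMulV A v i ≤ tMulV A' v' i :=
  tSum_mono fun j => add_le_add (hA i j) (hv j)

lemma tMulV_max (A A' : Matrix (Fin m) (Fin n) T) (v : Fin n → T) (i : Fin m) :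
    tMulV (fun i j => max (A i j) (A' i j)) v i = max (tMulV A v i) (tMulV A' v i) := by
  simp only [tMulV, max_add, tSum_max]

lemma tId_tMulM (A : Matrix (Fin n) (Fin k) T) : tMulM (tId n) A = A := by
  funext i j
  simpa [tMulM, tId, ite_add] using tSum_ite_eq i (A · j)

lemma tMulM_tId (A : Matrix (Fin m) (Fin n) T) : tMulM A (tId n) = A := by
  funext i j
  simpa [tMulM, tId, add_ite, eq_comm] using tSum_ite_eq j (A i)

lemma tId_tMulV (v : Fin n → T) : tMulV (tId n) v = v := by
  funext i
  simpa [tMulV, tId, ite_add] using tSum_ite_eq i v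

variable (A : Matrix (Fin n) (Fin n) T)

lemma tpow_one : tpow A 1 = A := tId_tMulM A

lemma tpow_add (a b : ℕ) : tpow A (a + b) = tMulM (tpow A a) (tpow A b) := by
  induction b with
  | zero => exact (tMulM_tId _).symm
  | succ b ih => rw [← add_assoc, tpow, ih, tMulM_assoc]; rfl

lemma tpow_succ' (k : ℕ) : tpow A (k + 1) = tMulM A (tpow A k) := by
  rw [add_comm, tpow_add, tpow_one]

lemma tpow_mono {A A' : Matrix (Fin n) (Fin n) T} (h : ∀ i j, A i j ≤ A' i j) (k : ℕ) (i j : Fin n) :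
    tpow A k i j ≤ tpow A' k i j := by
  induction k generalizing i j with
  | zero => exact le_rfl
  | succ k ih => exact tMulM_mono ih h i j

end MatrixAlgebra

section KleeneStar

variable {n : ℕ} (A : Matrix (Fin n) (Fin n) T)

lemma tpow_le_kstar {k : ℕ} (hk : k < n) (i j : Fin n) : tpow A k i j ≤ kstar A i j :=
  le_tSum (fun m : Fin n => tpow A m i j) ⟨k, hk⟩

lemma zero_le_kstar_self (i : Fin n) : 0 ≤ kstar A i i := by
  simpa [tpow, tId] using tpow_le_kstar A i.pos i i

variable {A}

lemma tMulV_tpow_le {x : Fin n → T} (hx : ∀ i, tMulV A x i ≤ x i) (k : ℕ) (i : Fin n) :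
    tMulV (tpow A k) x i ≤ x i := by
  induction k generalizing i with
  | zero => rw [tpow, tId_tMulV]
  | succ k ih =>
    rw [tpow, tMulV_tMulM]
    exact (tMulV_mono (fun _ _ => le_rfl) hx i).trans (ih i)

lemma tMulV_kstar_le {x : Fin n → T} (hx : ∀ i, tMulV A x i ≤ x i) (i : Fin n) :
    tMulV (kstar A) x i ≤ x i := by
  simp only [tMulV, kstar, tSum_add_const]
  rw [tSum_comm]
  exact tSum_le_iff.2 fun k => tMulV_tpow_le hx k i

variable (A)

lemma sum_walk_le_tpow (v : ℕ → Fin n) (a k : ℕ) :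
    ∑ t ∈ Finset.Ico a (a + k), A (v t) (v (t + 1)) ≤ tpow A k (v a) (v (a + k)) := by
  induction k with
  | zero => simp [tpow, tId]
  | succ k ih =>
    rw [← add_assoc, Finset.sum_Ico_succ_top (Nat.le_add_right a k)]
    exact (add_le_add ih le_rfl).trans (add_le_tMulM _ _ _ _ _)

lemma exists_walk_tpow_le (k : ℕ) (i j : Fin n) :
    ∃ v : ℕ → Fin n, v 0 = i ∧ v (k + 1) = j ∧
      tpow A (k + 1) i j ≤ ∑ t ∈ Finset.range (k + 1), A (v t) (v (t + 1)) := by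
  induction k generalizing j with
  | zero =>
    refine ⟨fun t => if t = 0 then i else j, rfl, rfl, ?_⟩
    simp [tpow_one]
  | succ k ih =>
    obtain ⟨c, hc⟩ := exists_tSum_eq (fun c => tpow A (k + 1) i c + A c j) i
    obtain ⟨v, hv0, hvc, hv⟩ := ih c
    refine ⟨fun t => if t = k + 2 then j else v t, by simpa using hv0, by simp, ?_⟩
    have hprefix : ∑ t ∈ Finset.range (k + 1),
        A (if t = k + 2 then j else v t) (if t + 1 = k + 2 then j else v (t + 1)) =
        ∑ t ∈ Finset.range (k + 1), A (v t) (v (t + 1)) :=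
      Finset.sum_congr rfl fun t ht => by
        have := Finset.mem_range.1 ht
        rw [if_neg (by omega), if_neg (by omega)]
    show tMulM (tpow A (k + 1)) A i j ≤ _
    rw [Finset.sum_range_succ, hprefix]
    dsimp only
    rw [if_neg (by omega), if_pos rfl, hvc]
    exact hc.le.trans (add_le_add hv le_rfl)

lemma tTr_tpow_le_TrB {m : ℕ} (hm : 1 ≤ m) (hmn : m ≤ n) : tTr (tpow A m) ≤ TrB A := by
  obtain ⟨k, rfl⟩ : ∃ k, m = k + 1 := ⟨m - 1, by omega⟩
  exact le_tSum (fun c : Fin n => tTr (tpow A (c + 1))) ⟨k, by omega⟩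

variable {A}

lemma tpow_self_le_zero (hA : TrB A ≤ 0) {m : ℕ} (hm : 1 ≤ m) (hmn : m ≤ n) (i : Fin n) :
    tpow A m i i ≤ 0 :=
  (le_tSum (fun c => tpow A m c c) i).trans ((tTr_tpow_le_TrB A hm hmn).trans hA)

/-- A walk with `n` steps visits some vertex twice; cutting out the closed subwalk between the
two visits, whose weight is at most `0`, leaves a shorter walk. -/
lemma tpow_card_le_kstar (hA : TrB A ≤ 0) (i j : Fin n) : tpow A n i j ≤ kstar A i j := by
  obtain ⟨k, rfl⟩ : ∃ k, n = k + 1 := ⟨n - 1, by have := i.pos; omega⟩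
  obtain ⟨v, hv0, hvn, hv⟩ := exists_walk_tpow_le A k i j
  obtain ⟨a, b, hab, hbk, hvab⟩ : ∃ a b : ℕ, a < b ∧ b ≤ k + 1 ∧ v a = v b := by
    obtain ⟨s, t, hst, hvst⟩ :=
      Fintype.exists_ne_map_eq_of_card_lt (fun t : Fin (k + 2) => v t) (by simp)
    rcases lt_or_gt_of_ne (Fin.val_ne_of_ne hst) with h | h
    · exact ⟨s, t, h, by omega, hvst⟩
    · exact ⟨t, s, h, by omega, hvst.symm⟩
  set w : ℕ → T := fun t => A (v t) (v (t + 1))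
  have hsplit : ∑ c ∈ Finset.range (k + 1), w c =
      ∑ c ∈ Finset.Ico 0 a, w c + ∑ c ∈ Finset.Ico a b, w c + ∑ c ∈ Finset.Ico b (k + 1), w c := by
    rw [Finset.sum_Ico_consecutive _ (Nat.zero_le _) hab.le,
      Finset.sum_Ico_consecutive _ (Nat.zero_le _) hbk, Finset.range_eq_Ico]
  have hhead := sum_walk_le_tpow A v 0 a
  have hcycle := sum_walk_le_tpow A v a (b - a)
  have htail := sum_walk_le_tpow A v b (k + 1 - b)
  simp only [zero_add, Nat.add_sub_cancel' hab.le, Nat.add_sub_cancel' hbk, hv0, hvn, ← hvab]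
    at hhead hcycle htail
  calc tpow A (k + 1) i j
      ≤ ∑ c ∈ Finset.Ico 0 a, w c + ∑ c ∈ Finset.Ico a b, w c + ∑ c ∈ Finset.Ico b (k + 1), w c :=
        hv.trans_eq hsplit
    _ ≤ tpow A a i (v a) + 0 + tpow A (k + 1 - b) (v a) j :=
        add_le_add (add_le_add hhead (hcycle.trans
          (tpow_self_le_zero hA (by omega) (by omega) _))) htail
    _ ≤ tpow A (a + (k + 1 - b)) i j := by
        rw [add_zero, tpow_add]
        exact add_le_tMulM _ _ _ _ _
    _ ≤ kstar A i j := tpow_le_kstar A (by omega) i j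

lemma tMulM_kstar_le (hA : TrB A ≤ 0) (i j : Fin n) : tMulM A (kstar A) i j ≤ kstar A i j := by
  simp only [tMulM, kstar, const_add_tSum]
  rw [tSum_comm]
  refine tSum_le_iff.2 fun m => ?_
  rw [← tMulM, ← tpow_succ']
  rcases (show (m : ℕ) + 1 ≤ n from m.isLt).lt_or_eq with hm | hm
  · exact tpow_le_kstar A hm i j
  · rw [hm]
    exact tpow_card_le_kstar hA i j

end KleeneStar

section Conjugation

lemma tconj_coe (r : ℝ) : tconj (r : T) = ((-r : ℝ) : T) := rfl

lemma coe_neg_add_le_zero_iff (r : ℝ) (s : T) : ((-r : ℝ) : T) + s ≤ 0 ↔ s ≤ r := by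
  induction s using WithBot.recBotCoe with
  | bot => simp
  | coe s => norm_cast; constructor <;> intro <;> linarith

lemma le_tconj_iff {t u : T} (ht : t ≠ ⊥) : u ≤ tconj t ↔ t + u ≤ 0 := by
  obtain ⟨r, rfl⟩ := WithBot.ne_bot_iff_exists.1 ht
  rw [tconj_coe, ← neg_neg r, coe_neg_add_le_zero_iff, neg_neg]

lemma tconj_add_le_zero {t θ : T} (h : t ≤ θ) : tconj θ + t ≤ 0 := by
  induction θ using WithBot.recBotCoe with
  | bot => simp [tconj]
  | coe r => rwa [tconj_coe, coe_neg_add_le_zero_iff]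

/-- The diagonal condition keeps every entry of `h⁻ G` finite, and on finite values
conjugation is an order-reversing involution. -/
lemma tMulV_le_coe_iff {n : ℕ} {G : Matrix (Fin n) (Fin n) T} (hG : ∀ j, 0 ≤ G j j)
    (h : Fin n → ℝ) (u : Fin n → T) :
    (∀ i, tMulV G u i ≤ h i) ↔
      ∀ j, u j ≤ tconj (tSum fun a => ((-(h a) : ℝ) : T) + G a j) := by
  have hfinite : ∀ j, (tSum fun a => ((-(h a) : ℝ) : T) + G a j) ≠ ⊥ := fun j =>
    ne_bot_of_le_ne_bot (WithBot.coe_ne_bot (a := -h j))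
      (le_tSum_of_le j (le_add_of_nonneg_right (hG j)))
  simp only [le_tconj_iff (hfinite _), tSum_add_const, tSum_le_iff, tMulV, add_assoc,
    coe_neg_add_le_zero_iff]
  exact forall_comm

end Conjugation

variable {n : ℕ} {A : Matrix (Fin n) (Fin n) T} in
lemma tMulV_le_self_between_iff_exists_kstar (hA : TrB A ≤ 0) (hn : 0 < n) (g : Fin n → T)
    (h x : Fin n → ℝ) :
    ((∀ i, tMulV A (fun j => (x j : T)) i ≤ x i) ∧ (∀ i, g i ≤ x i) ∧
        (∀ i, (x i : T) ≤ h i)) ↔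
      ∃ u : Fin n → T, (∃ i, u i ≠ ⊥) ∧ (∀ i, g i ≤ u i) ∧
        (∀ i, u i ≤ tconj (tSum fun a => ((-(h a) : ℝ) : T) + kstar A a i)) ∧
        ∀ i, (x i : T) = tMulV (kstar A) u i := by
  have hdiag := zero_le_kstar_self A
  have le_kstar_tMulV : ∀ v i, v i ≤ tMulV (kstar A) v i := fun v i =>
    le_tSum_of_le i (le_add_of_nonneg_left (hdiag i))
  constructor
  · rintro ⟨hAx, hg, hh⟩
    have hfix : ∀ i, (x i : T) = tMulV (kstar A) (fun j => (x j : T)) i := fun i =>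
      le_antisymm (le_kstar_tMulV (fun j => (x j : T)) i) (tMulV_kstar_le hAx i)
    refine ⟨fun j => x j, ⟨⟨0, hn⟩, WithBot.coe_ne_bot⟩, hg, ?_, hfix⟩
    exact (tMulV_le_coe_iff hdiag h _).1 fun i => (hfix i).symm.trans_le (hh i)
  · rintro ⟨u, -, hg, hu, hx⟩
    have hxu : (fun j => (x j : T)) = tMulV (kstar A) u := funext hx
    refine ⟨fun i => ?_, fun i => (hg i).trans ((le_kstar_tMulV u i).trans_eq (hx i).symm),
      fun i => (hx i).trans_le ((tMulV_le_coe_iff hdiag h u).2 hu i)⟩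
    rw [hxu, ← tMulV_tMulM, hx i]
    exact tMulV_mono (tMulM_kstar_le hA) (fun _ => le_rfl) i

lemma mem_pairSet {m : ℕ} {ab : ℕ × ℕ} : ab ∈ pairSet m ↔ ab.1 + ab.2 + 2 ≤ m := by
  simp only [pairSet, Finset.mem_filter, Finset.mem_product, Finset.mem_range]
  omega

section RankOne

variable {n : ℕ} (B : Matrix (Fin n) (Fin n) T) (p q : Fin n → T) (θ : T)

def colPow (a : ℕ) : Fin n → T := tMulV (tpow B a) p

def rowPow (b : ℕ) : Fin n → T := fun j => tSum fun k => tconj (q k) + tpow B b k j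

/-- The entries of `θ⁻¹ Bᵃ p q⁻ Bᵇ`. -/
def rankOneTerm (a b : ℕ) : Matrix (Fin n) (Fin n) T :=
  fun i j => tconj θ + (colPow B p a i + rowPow B q b j)

def augMat : Matrix (Fin n) (Fin n) T := fun i j => max (B i j) (tconj θ + pqm p q i j)

lemma tMulV_augMat (v : Fin n → T) (i : Fin n) :
    tMulV (augMat B p q θ) v i =
      max (tMulV B v i) (tMulV (fun i j => tconj θ + pqm p q i j) v i) :=
  tMulV_max _ _ v i

lemma colPow_zero : colPow B p 0 = p := tId_tMulV p

lemma rowPow_zero (j : Fin n) : rowPow B q 0 j = tconj (q j) := by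
  simpa [rowPow, tpow, tId, add_ite, eq_comm] using tSum_ite_eq j (fun k => tconj (q k))

lemma rowPow_succ (b : ℕ) (j : Fin n) :
    rowPow B q (b + 1) j = tSum fun k => rowPow B q b k + B k j :=
  tSum_add_tSum_assoc _ _ _

lemma tDot_rowPow_colPow (a b : ℕ) :
    tDot (rowPow B q b) (colPow B p a) = vMv (fun l => tconj (q l)) (tpow B (b + a)) p := by
  show _ = tDot _ (tMulV (tpow B (b + a)) p)
  rw [tpow_add, tMulV_tMulM]
  exact (tSum_add_tSum_assoc _ _ _).symm

lemma const_add_tMulM_pqm (a b : ℕ) (i j : Fin n) :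
    tconj θ + tMulM (tMulM (tpow B a) (pqm p q)) (tpow B b) i j = rankOneTerm B p q θ a b i j := by
  simp only [rankOneTerm, colPow, rowPow, tMulM, tMulV, pqm, ← add_assoc, tSum_add_const,
    const_add_tSum]

lemma rankOneTerm_le_tpow (a b : ℕ) (i j : Fin n) :
    rankOneTerm B p q θ a b i j ≤ tpow (augMat B p q θ) (a + 1 + b) i j := by
  rw [tpow_add, tpow, rankOneTerm, colPow, rowPow, tMulV, ← tSum_add_tSum, const_add_tSum,
    tSum_le_iff]
  intro l
  rw [const_add_tSum, tSum_le_iff]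
  intro k
  calc tconj θ + (tpow B a i l + p l + (tconj (q k) + tpow B b k j))
      = tpow B a i l + (tconj θ + pqm p q l k) + tpow B b k j := by simp only [pqm]; abel
    _ ≤ tpow (augMat B p q θ) a i l + augMat B p q θ l k + tpow (augMat B p q θ) b k j :=
        add_le_add (add_le_add (tpow_mono (fun _ _ => le_max_left _ _) a i l) (le_max_right _ _))
          (tpow_mono (fun _ _ => le_max_left _ _) b k j)
    _ ≤ _ := (add_le_add (add_le_tMulM _ _ i l k) le_rfl).trans (add_le_tMulM _ _ i k j)

lemma tpow_add_rankOne_le (m : ℕ) (i k j : Fin n) :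
    tpow B m i k + (tconj θ + pqm p q k j) ≤ rankOneTerm B p q θ m 0 i j := by
  rw [rankOneTerm, rowPow_zero]
  calc tpow B m i k + (tconj θ + pqm p q k j)
      = tconj θ + ((tpow B m i k + p k) + tconj (q j)) := by simp only [pqm]; abel
    _ ≤ _ := add_le_add le_rfl (add_le_add (le_tSum (fun k => tpow B m i k + p k) k) le_rfl)

lemma rankOneTerm_add_le_succ (a b : ℕ) (i k j : Fin n) :
    rankOneTerm B p q θ a b i k + B k j ≤ rankOneTerm B p q θ a (b + 1) i j := by
  rw [rankOneTerm, rankOneTerm, rowPow_succ, add_assoc, add_assoc]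
  exact add_le_add le_rfl (add_le_add le_rfl (le_tSum (fun k => rowPow B q b k + B k j) k))

lemma rankOneTerm_add_rankOne_le {a b : ℕ} {k : Fin n} (h : rowPow B q b k + p k ≤ θ)
    (i j : Fin n) :
    rankOneTerm B p q θ a b i k + (tconj θ + pqm p q k j) ≤ rankOneTerm B p q θ a 0 i j := by
  rw [rankOneTerm, rankOneTerm, rowPow_zero]
  calc tconj θ + (colPow B p a i + rowPow B q b k) + (tconj θ + pqm p q k j)
      = tconj θ + (colPow B p a i + tconj (q j)) + (tconj θ + (rowPow B q b k + p k)) := by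
        simp only [pqm]; abel
    _ ≤ tconj θ + (colPow B p a i + tconj (q j)) + 0 := add_le_add le_rfl (tconj_add_le_zero h)
    _ = _ := add_zero _

end RankOne

section Absorption

variable {n : ℕ} {B : Matrix (Fin n) (Fin n) T} {p q : Fin n → T} {θ : T}

lemma rankOneTerm_le_sup {m a b : ℕ} (h : a + b + 2 ≤ m) (i j : Fin n) :
    rankOneTerm B p q θ a b i j ≤
      (pairSet m).sup fun ab => rankOneTerm B p q θ ab.1 ab.2 i j := by
  have hab : (a, b) ∈ pairSet m := mem_pairSet.2 h
  exact Finset.le_sup (f := fun ab => rankOneTerm B p q θ ab.1 ab.2 i j) hab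

lemma rowPow_add_colPow_le (hqBp : ∀ k < n, vMv (fun l => tconj (q l)) (tpow B k) p ≤ θ)
    {a b : ℕ} (hab : b + a < n) (k : Fin n) : rowPow B q b k + colPow B p a k ≤ θ :=
  (le_tSum (fun k => rowPow B q b k + colPow B p a k) k).trans
    ((tDot_rowPow_colPow B p q a b).trans_le (hqBp _ hab))

/-- Expanding the power, every product containing the rank-one factor twice is absorbed by one
containing it once. -/
lemma tpow_augMat_le (hqBp : ∀ k < n, vMv (fun l => tconj (q l)) (tpow B k) p ≤ θ) :
    ∀ m ≤ n, ∀ i j, tpow (augMat B p q θ) m i j ≤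
      max (tpow B m i j) ((pairSet (m + 1)).sup fun ab => rankOneTerm B p q θ ab.1 ab.2 i j) := by
  intro m
  induction m with
  | zero => exact fun _ _ _ => le_max_left _ _
  | succ m ih =>
    intro hm i j
    refine tSum_le_iff.2 fun k => (add_le_add (ih (by omega) i k) le_rfl).trans ?_
    show _ + max (B k j) (tconj θ + pqm p q k j) ≤ _
    rw [max_add, add_max, add_max, Finset.sup_add_const, Finset.sup_add_const]
    refine max_le (max_le ?_ ?_) (max_le ?_ ?_)
    · exact le_max_of_le_left (add_le_tMulM _ _ i k j)
    · exact le_max_of_le_right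
        ((tpow_add_rankOne_le B p q θ m i k j).trans (rankOneTerm_le_sup (by omega) i j))
    · refine le_max_of_le_right (Finset.sup_le fun ab hab => ?_)
      have := mem_pairSet.1 hab
      exact (rankOneTerm_add_le_succ B p q θ _ _ i k j).trans (rankOneTerm_le_sup (by omega) i j)
    · refine le_max_of_le_right (Finset.sup_le fun ab hab => ?_)
      have := mem_pairSet.1 hab
      have hqp : rowPow B q ab.2 k + p k ≤ θ := by
        simpa [colPow_zero] using rowPow_add_colPow_le hqBp (a := 0) (by omega) k
      exact (rankOneTerm_add_rankOne_le B p q θ hqp i j).trans (rankOneTerm_le_sup (by omega) i j)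

lemma TrB_augMat_le (hTr : TrB B ≤ 0)
    (hqBp : ∀ k < n, vMv (fun l => tconj (q l)) (tpow B k) p ≤ θ) :
    TrB (augMat B p q θ) ≤ 0 := by
  refine tSum_le_iff.2 fun m => tSum_le_iff.2 fun i =>
    (tpow_augMat_le hqBp (m + 1) m.isLt i i).trans
      (max_le (tpow_self_le_zero hTr (by omega) m.isLt i) (Finset.sup_le fun ab hab => ?_))
  have := mem_pairSet.1 hab
  exact tconj_add_le_zero ((add_comm _ _).trans_le (rowPow_add_colPow_le hqBp (by omega) i))

lemma kstar_augMat (hqBp : ∀ k < n, vMv (fun l => tconj (q l)) (tpow B k) p ≤ θ) :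
    kstar (augMat B p q θ) = fun a b => max
      ((pairSet n).sup fun ij =>
        tconj θ + tMulM (tMulM (tpow B ij.1) (pqm p q)) (tpow B ij.2) a b)
      (kstar B a b) := by
  funext i j
  simp only [const_add_tMulM_pqm]
  refine le_antisymm (tSum_le_iff.2 fun k => (tpow_augMat_le hqBp k k.isLt.le i j).trans
    (max_le (le_max_of_le_right (tpow_le_kstar B k.isLt i j))
      (le_max_of_le_left (Finset.sup_mono fun ab hab => ?_))))
    (max_le (Finset.sup_le fun ab hab => ?_)
      (tSum_mono fun k => tpow_mono (fun _ _ => le_max_left _ _) k i j))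
  · have := mem_pairSet.1 hab
    have := k.isLt
    exact mem_pairSet.2 (by omega)
  · have := mem_pairSet.1 hab
    exact (rankOneTerm_le_tpow B p q θ _ _ i j).trans (tpow_le_kstar _ (by omega) i j)

end Absorption

section Objective

variable {n : ℕ}

lemma vMv_mono {u v : Fin n → T} {A A' : Matrix (Fin n) (Fin n) T} (h : ∀ i j, A i j ≤ A' i j) :
    vMv u A v ≤ vMv u A' v :=
  tSum_mono fun i => add_le_add le_rfl (tMulV_mono h (fun _ => le_rfl) i)

lemma vMv_tId (u v : Fin n → T) : vMv u (tId n) v = tDot u v := by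
  show tDot u (tMulV (tId n) v) = _
  rw [tId_tMulV]

lemma tSum_tSum_eq_tDot_add_tDot (a b c d : Fin n → T) :
    (tSum fun i => tSum fun j => a i + b i + c j + d j) = tDot a b + tDot c d := by
  rw [tDot, tDot, ← tSum_add_tSum]
  simp only [add_assoc]

lemma le_coe_add_coe_neg {t : T} {a c : ℝ} (h : t + (c : T) ≤ a) :
    t ≤ (a : T) + ((-c : ℝ) : T) := by
  induction t using WithBot.recBotCoe with
  | bot => exact bot_le
  | coe t => norm_cast at h ⊢; linarith

lemma coe_neg_add_add_le_iff (r a c : ℝ) (s₁ s₂ : T) :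
    ((-r : ℝ) : T) + (s₁ + s₂) + (c : T) ≤ (a : T) ↔ ((-a : ℝ) : T) + s₁ + s₂ + (c : T) ≤ r := by
  induction s₁ using WithBot.recBotCoe with
  | bot => simp
  | coe s₁ =>
    induction s₂ using WithBot.recBotCoe with
    | bot => simp
    | coe s₂ => norm_cast; constructor <;> intro <;> linarith

lemma tMulV_rankOne_le_iff (p q : Fin n → T) (r : ℝ) (x : Fin n → ℝ) :
    (∀ i, tMulV (fun i j => tconj (r : T) + pqm p q i j) (fun j => (x j : T)) i ≤ x i) ↔
      (tSum fun i => tSum fun j => ((-(x i) : ℝ) : T) + p i + tconj (q j) + (x j : T)) ≤ r := by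
  simp only [tMulV, pqm, tconj_coe, tSum_le_iff, coe_neg_add_add_le_iff]

lemma vMv_le_tDot_add_tDot {M : Matrix (Fin n) (Fin n) T} {x : Fin n → ℝ}
    (hx : ∀ i, tMulV M (fun j => (x j : T)) i ≤ x i) (u v : Fin n → T) :
    vMv u M v ≤ tDot u (fun j => (x j : T)) + tDot (fun j => ((-(x j) : ℝ) : T)) v := by
  refine tSum_le_iff.2 fun l => ?_
  rw [const_add_tSum]
  refine tSum_le_iff.2 fun m => ?_
  have hM : M l m ≤ (x l : T) + ((-(x m) : ℝ) : T) :=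
    le_coe_add_coe_neg ((le_tSum (fun m => M l m + (x m : T)) m).trans (hx l))
  calc u l + (M l m + v m)
      ≤ u l + ((x l : T) + ((-(x m) : ℝ) : T) + v m) := add_le_add le_rfl (add_le_add hM le_rfl)
    _ = (u l + (x l : T)) + (((-(x m) : ℝ) : T) + v m) := by abel
    _ ≤ _ := add_le_add (le_tSum (fun l => u l + (x l : T)) l)
          (le_tSum (fun m => ((-(x m) : ℝ) : T) + v m) m)

lemma le_objective (B : Matrix (Fin n) (Fin n) T) (p q g : Fin n → T) (h : Fin n → ℝ) (θ : T)
    (hθdef : θ = max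
      ((pairSet n).sup fun ij =>
        vMv (fun l => ((-(h l) : ℝ) : T)) (tpow B ij.1) p +
          vMv (fun l => tconj (q l)) (tpow B ij.2) g)
      (vMv (fun l => tconj (q l)) (kstar B) p))
    (x : Fin n → ℝ) (hBx : ∀ i, tMulV B (fun j => (x j : T)) i ≤ x i)
    (hg : ∀ i, g i ≤ x i) (hh : ∀ i, (x i : T) ≤ h i) :
    θ ≤ tSum fun i => tSum fun j => ((-(x i) : ℝ) : T) + p i + tconj (q j) + (x j : T) := by
  have hxh : tDot (fun l => ((-(h l) : ℝ) : T)) (fun j => (x j : T)) ≤ 0 :=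
    tSum_le_iff.2 fun i => (coe_neg_add_le_zero_iff _ _).2 (hh i)
  have hgx : tDot (fun j => ((-(x j) : ℝ) : T)) g ≤ 0 :=
    tSum_le_iff.2 fun i => (coe_neg_add_le_zero_iff _ _).2 (hg i)
  rw [hθdef, tSum_tSum_eq_tDot_add_tDot]
  refine max_le (Finset.sup_le fun ab _ => add_le_add ?_ ?_)
    ((vMv_le_tDot_add_tDot (tMulV_kstar_le hBx) _ _).trans_eq (add_comm _ _))
  · refine (vMv_le_tDot_add_tDot (tMulV_tpow_le hBx _) _ _).trans ?_
    exact (add_le_add hxh le_rfl).trans_eq (zero_add _)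
  · refine (vMv_le_tDot_add_tDot (tMulV_tpow_le hBx _) _ _).trans ?_
    exact (add_le_add le_rfl hgx).trans_eq (add_zero _)

end Objective

theorem tropical_rank_one_optimization_solutions_general {n : ℕ}
    (B : Matrix (Fin n) (Fin n) T) (p q : Fin n → T) (g : Fin n → T) (h : Fin n → ℝ)
    (hTr : TrB B ≤ 0)
    (hqp : tSum (fun i => tconj (q i) + p i) ≠ ⊥)
    (θ : T)
    (hθdef : θ = max
      ((pairSet n).sup fun ij =>
        vMv (fun l => ((-(h l) : ℝ) : T)) (tpow B ij.1) p +
          vMv (fun l => tconj (q l)) (tpow B ij.2) g)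
      (vMv (fun l => tconj (q l)) (kstar B) p))
    (G : Matrix (Fin n) (Fin n) T)
    (hGdef : G = fun a b => max
      ((pairSet n).sup fun ij =>
        tconj θ + tMulM (tMulM (tpow B ij.1) (pqm p q)) (tpow B ij.2) a b)
      (kstar B a b))
    (x : Fin n → ℝ) :
    ((∀ i, tSum (fun j => B i j + (x j : T)) ≤ (x i : T)) ∧
      (∀ i, g i ≤ (x i : T)) ∧ (∀ i, (x i : T) ≤ (h i : T)) ∧
      (tSum fun i => tSum fun j =>
        ((-(x i) : ℝ) : T) + p i + tconj (q j) + (x j : T)) = θ) ↔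
      ∃ u : Fin n → T, (∃ i, u i ≠ ⊥) ∧
        (∀ i, g i ≤ u i) ∧
        (∀ i, u i ≤ tconj (tSum fun a => ((-(h a) : ℝ) : T) + G a i)) ∧
        (∀ i, (x i : T) = tSum fun j => G i j + u j) := by
  have hn : 0 < n := pos_of_tSum_ne_bot hqp
  have hqBp : ∀ k < n, vMv (fun l => tconj (q l)) (tpow B k) p ≤ θ := fun k hk =>
    (vMv_mono (tpow_le_kstar B hk)).trans (hθdef ▸ le_max_right _ _)
  obtain ⟨r, rfl⟩ : ∃ r : ℝ, (r : T) = θ := WithBot.ne_bot_iff_exists.1 <|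
    ne_bot_of_le_ne_bot hqp ((vMv_tId _ p).symm.trans_le (hqBp 0 hn))
  rw [← kstar_augMat hqBp] at hGdef
  subst hGdef
  refine Iff.trans ?_ (tMulV_le_self_between_iff_exists_kstar (TrB_augMat_le hTr hqBp) hn g h x)
  simp only [tMulV_augMat, max_le_iff, forall_and]
  constructor
  · rintro ⟨hBx, hg, hh, hobj⟩
    exact ⟨⟨hBx, (tMulV_rankOne_le_iff p q r x).2 hobj.le⟩, hg, hh⟩
  · rintro ⟨⟨hBx, hDx⟩, hg, hh⟩
    exact ⟨hBx, hg, hh,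
      le_antisymm ((tMulV_rankOne_le_iff p q r x).1 hDx) (le_objective B p q g h _ hθdef x hBx hg hh)⟩

/-- Attainment and completeness for the rank-one tropical optimization problem:
a regular x is feasible and attains the minimum θ iff x = G u for some nonzero u
with g ≤ u ≤ (h⁻G)⁻, where G = ⊕_{0≤i+j≤n−2} θ⁻¹ B^i p q⁻ B^j ⊕ B*. -/
theorem tropical_rank_one_optimization_solutions {n : ℕ}
    (B : Matrix (Fin n) (Fin n) T) (p q : Fin n → T) (g : Fin n → T) (h : Fin n → ℝ)
    (hTr : TrB B ≤ 0)
    (hfeas : vMv (fun l => ((-(h l) : ℝ) : T)) (kstar B) g ≤ 0)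
    (hp : ∃ i, p i ≠ ⊥) (hq : ∃ i, q i ≠ ⊥)
    (hqp : tSum (fun i => tconj (q i) + p i) ≠ ⊥)
    (θ : T)
    (hθdef : θ = max
      ((pairSet n).sup fun ij =>
        vMv (fun l => ((-(h l) : ℝ) : T)) (tpow B ij.1) p +
          vMv (fun l => tconj (q l)) (tpow B ij.2) g)
      (vMv (fun l => tconj (q l)) (kstar B) p))
    (G : Matrix (Fin n) (Fin n) T)
    (hGdef : G = fun a b => max
      ((pairSet n).sup fun ij =>
        tconj θ + tMulM (tMulM (tpow B ij.1) (pqm p q)) (tpow B ij.2) a b)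
      (kstar B a b))
    (x : Fin n → ℝ) :
    ((∀ i, tSum (fun j => B i j + (x j : T)) ≤ (x i : T)) ∧
      (∀ i, g i ≤ (x i : T)) ∧ (∀ i, (x i : T) ≤ (h i : T)) ∧
      (tSum fun i => tSum fun j =>
        ((-(x i) : ℝ) : T) + p i + tconj (q j) + (x j : T)) = θ) ↔
      ∃ u : Fin n → T, (∃ i, u i ≠ ⊥) ∧
        (∀ i, g i ≤ u i) ∧
        (∀ i, u i ≤ tconj (tSum fun a => ((-(h a) : ℝ) : T) + G a i)) ∧
        (∀ i, (x i : T) = tSum fun j => G i j + u j) :=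
  tropical_rank_one_optimization_solutions_general B p q g h hTr hqp θ hθdef G hGdef x
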